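/- arXiv:2602.06903 — 8 statements merged into one kernel-verified Lean document; each statement's English description precedes it below -/
import Mathlib

section
/- In a food web F, if P is a ½-viable set containing the root v₀ of a selector widget S_v (whose only external connections are arcs out of v₀), then P contains at least C vertices of S_v. -/
/-- The set of in-neighbours (prey) of `w` in the directed graph `F`. -/
def inN {V : Type*} (F : V → V → Prop) (w : V) : Set V := {u | F u w}

/-- `F` is a DAG. -/
def Acyclic {V : Type*} (F : V → V → Prop) : Prop := ∀ v, ¬ Relation.TransGen F v v

/-- `P` is ½-viable: every non-source vertex of `P` has at least half of its
in-neighbours in `P`. -/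
def HalfViable {V : Type*} (F : V → V → Prop) (P : Set V) : Prop :=
  ∀ w ∈ P, inN F w ≠ ∅ → (inN F w).ncard ≤ 2 * (inN F w ∩ P).ncard

/-- In a food web `F`, if `P` is a ½-viable set containing the root `v₀` of a
selector widget `S` (with parameter `C`: `v₀` has exactly the `2(C−1)` other vertices of `S`
as in-neighbours, and no vertex of `S` other than `v₀` has any neighbour outside `S`),
then `P` contains at least `C` vertices of `S`. -/
theorem stmt_2 {V : Type*} [Fintype V] (F : V → V → Prop) (hacyc : Acyclic F)
    (C : ℕ) (hC : 1 ≤ C) (S : Set V) (v₀ : V) (hv₀S : v₀ ∈ S)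
    (hin : inN F v₀ = S \ {v₀})
    (hcard : (S \ {v₀}).ncard = 2 * (C - 1))
    (hclosed : ∀ u ∈ S, u ≠ v₀ → ∀ w, (F u w → w ∈ S) ∧ (F w u → w ∈ S))
    (P : Set V) (hP : HalfViable F P) (hv₀P : v₀ ∈ P) :
    C ≤ (P ∩ S).ncard := by
  set A : Set V := (S \ {v₀}) ∩ P with hA
  have hA1 : C - 1 ≤ A.ncard := by
    rcases Nat.lt_or_ge C 2 with h2 | h2
    · interval_cases C <;> simp
    · have hne : inN F v₀ ≠ ∅ := by
        intro h
        rw [h] at hin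
        rw [← hin, Set.ncard_empty] at hcard
        omega
      have := hP v₀ hv₀P hne
      rw [hin, hcard] at this
      rw [hA]; omega
  have hins : insert v₀ A ⊆ P ∩ S := by
    intro x hx
    rcases hx with rfl | hx
    · exact ⟨hv₀P, hv₀S⟩
    · exact ⟨hx.2, hx.1.1⟩
  have hnm : v₀ ∉ A := fun h => h.1.2 rfl
  have h1 : (insert v₀ A).ncard = A.ncard + 1 :=
    Set.ncard_insert_of_notMem hnm (Set.toFinite _)
  have h2 : (insert v₀ A).ncard ≤ (P ∩ S).ncard :=
    Set.ncard_le_ncard hins (Set.toFinite _)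
  omega
end

section
/- Let P be a ½-viable set in a food web F and let S_v be a selector widget with root v₀ and parameter C. Then the set P' obtained from P by removing all vertices of S_v and adding v₀ together with any C−1 of the other vertices of S_v is again ½-viable, contains v₀, and agrees with P outside S_v. -/
/-- Let `P` be a ½-viable set in a food web `F` and let `S` be a selector
widget with root `v₀` and parameter `C` (the `2(C−1)` in-neighbours of `v₀` are exactly the
other vertices of `S`, these other vertices are sources and their only out-neighbour is `v₀`).
Then the set `P'` obtained from `P` by removing all vertices of `S` and adding `v₀` together
with any `C−1` of the other vertices of `S` is again ½-viable, contains `v₀`, and agrees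
with `P` outside `S`. -/
theorem stmt_3 {V : Type*} [Fintype V] (F : V → V → Prop) (hacyc : Acyclic F)
    (C : ℕ) (hC : 1 ≤ C) (S : Set V) (v₀ : V) (hv₀S : v₀ ∈ S)
    (hin : inN F v₀ = S \ {v₀})
    (hcard : (S \ {v₀}).ncard = 2 * (C - 1))
    (hsources : ∀ u ∈ S, u ≠ v₀ → inN F u = ∅)
    (hout : ∀ u ∈ S, u ≠ v₀ → ∀ w, F u w → w = v₀)
    (P : Set V) (hP : HalfViable F P)
    (K : Set V) (hK : K ⊆ S \ {v₀}) (hKcard : K.ncard = C - 1) :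
    HalfViable F ((P \ S) ∪ insert v₀ K) ∧
    v₀ ∈ (P \ S) ∪ insert v₀ K ∧
    ∀ w ∉ S, (w ∈ (P \ S) ∪ insert v₀ K ↔ w ∈ P) := by

  refine ⟨?_, Or.inr (Set.mem_insert _ _), ?_⟩
  · intro w hw hne
    rcases hw with hw | hw
    · -- w ∈ P \ S
      have hwP : w ∈ P := hw.1
      have key : inN F w ∩ P ⊆ inN F w ∩ ((P \ S) ∪ insert v₀ K) := by
        rintro u ⟨hu, huP⟩
        refine ⟨hu, ?_⟩
        by_cases huS : u ∈ S
        · by_cases huv : u = v₀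
          · exact Or.inr (huv ▸ Set.mem_insert _ _)
          · exact absurd (by rw [hout u huS huv w hu]; exact hv₀S) hw.2
        · exact Or.inl ⟨huP, huS⟩
      calc (inN F w).ncard ≤ 2 * (inN F w ∩ P).ncard := hP w hwP hne
        _ ≤ 2 * (inN F w ∩ ((P \ S) ∪ insert v₀ K)).ncard := by
            exact Nat.mul_le_mul_left 2 (Set.ncard_le_ncard key (Set.toFinite _))
    · rcases hw with rfl | hwK
      · -- w = v₀
        have hKsub : K ⊆ inN F w ∩ ((P \ S) ∪ insert w K) := by
          intro u hu
          exact ⟨hin ▸ hK hu, Or.inr (Set.mem_insert_of_mem _ hu)⟩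
        have : (C - 1) ≤ (inN F w ∩ ((P \ S) ∪ insert w K)).ncard := by
          rw [← hKcard]; exact Set.ncard_le_ncard hKsub (Set.toFinite _)
        rw [hin] at this
        rw [hin, hcard]
        omega
      · exact absurd (hsources w (hK hwK).1 (hK hwK).2) hne
  · intro w hwS
    constructor
    · rintro (h | h)
      · exact h.1
      · rcases h with rfl | h
        · exact absurd hv₀S hwS
        · exact absurd (hK h).1 hwS
    · intro h; exact Or.inl ⟨h, hwS⟩
end

section
/- Let Q be a quota widget of type Q(δ,ℓ,r,M) with root x inside a food web F, and let P be a ½-viable set with |P| ≤ B and x ∈ P. Then P contains at least ℓ prey of x outside Q; moreover, if ℓ' is the number of prey of x outside Q contained in P, then P contains at least 1 + max(δ,r) − ℓ' + (M−1)·max(0, r−ℓ') vertices of Q. -/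
/-- Let `Q` be a quota widget of type Q(δ,ℓ,r,M) with root `x` inside a food
web `F`, and let `P` be a ½-viable set with `|P| ≤ B` and `x ∈ P`. Then `P` contains at
least `ℓ` prey of `x` outside `Q`; moreover, if `ℓ'` is the number of prey of `x` outside
`Q` contained in `P`, then `P` contains at least
`1 + max(δ,r) − ℓ' + (M−1)·max(0, r−ℓ')` vertices of `Q`. -/
theorem stmt_4 {V : Type*} [Fintype V] (F : V → V → Prop) (hacyc : Acyclic F)
    (B M δ ℓ r : ℕ) (hB : 1 ≤ B) (hM : 1 ≤ M) (hlr : ℓ ≤ r)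
    (x : V) (Q Big Med Small : Set V)
    (hxQ : x ∈ Q) (hBQ : Big ⊆ Q) (hMQ : Med ⊆ Q) (hSQ : Small ⊆ Q)
    (hxB : x ∉ Big) (hxM : x ∉ Med) (hxS : x ∉ Small)
    (hBM : Disjoint Big Med) (hBS : Disjoint Big Small) (hMS : Disjoint Med Small)
    (hBcard : Big.ncard = ℓ + (r - δ))
    (hMcard : Med.ncard = r - ℓ)
    (hScard : Small.ncard = δ - r)
    (hinx : inN F x ∩ Q = Big ∪ Med ∪ Small)
    (hext : (inN F x \ Q).ncard = δ)
    (hbig : ∀ b ∈ Big, inN F b ⊆ Q ∧ (inN F b).ncard = 2 * (B - 1))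
    (hmed : ∀ m ∈ Med, inN F m ⊆ Q ∧ (inN F m).ncard = 2 * (M - 1))
    (hsmall : ∀ s ∈ Small, inN F s = ∅)
    (hleafdisj : ∀ a ∈ Big ∪ Med, ∀ b ∈ Big ∪ Med, a ≠ b → Disjoint (inN F a) (inN F b))
    (hleaf : ∀ a ∈ Big ∪ Med, ∀ u ∈ inN F a,
      inN F u = ∅ ∧ (∀ w, F u w → w = a) ∧ u ∉ insert x (Big ∪ Med ∪ Small))
    (hQ : Q = insert x (Big ∪ Med ∪ Small) ∪ (⋃ a ∈ Big ∪ Med, inN F a))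
    (hclosed : ∀ u ∈ Q, u ≠ x → ∀ w, (F u w → w ∈ Q) ∧ (F w u → w ∈ Q))
    (P : Set V) (hP : HalfViable F P) (hPB : P.ncard ≤ B) (hxP : x ∈ P) :
    ℓ ≤ ((inN F x \ Q) ∩ P).ncard ∧
    1 + (max δ r - ((inN F x \ Q) ∩ P).ncard)
        + (M - 1) * (r - ((inN F x \ Q) ∩ P).ncard) ≤ (P ∩ Q).ncard := by
  classical
  have finV : ∀ s : Set V, s.Finite := fun s => s.toFinite
  -- half-viability counting at a vertex with in-degree 2*(k-1)
  have hcnt : ∀ a ∈ P, ∀ k : ℕ, (inN F a).ncard = 2 * (k - 1) →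
      k - 1 ≤ (inN F a ∩ P).ncard := by
    intro a haP k hk
    rcases Nat.eq_zero_or_pos (k - 1) with h0 | h0
    · omega
    · have hne : inN F a ≠ ∅ := by
        intro he
        rw [he, Set.ncard_empty] at hk
        omega
      have := hP a haP hne
      omega
  -- no big vertex is in P
  have hBigP : Big ∩ P = ∅ := by
    by_contra h
    obtain ⟨y, hyB, hyP⟩ := Set.nonempty_iff_ne_empty.mpr h
    have hmem : y ∈ Big ∪ Med := Or.inl hyB
    have hc := hcnt y hyP B (hbig y hyB).2
    have hxny : x ∉ inN F y := fun hx => (hleaf y hmem x hx).2.2 (Set.mem_insert _ _)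
    have hyny : y ∉ inN F y := fun hy => (hleaf y hmem y hy).2.2
      (Set.mem_insert_of_mem _ (Or.inl (Or.inl hyB)))
    have hxy : x ≠ y := fun h' => hxB (h' ▸ hyB)
    have h1 : y ∉ inN F y ∩ P := fun h' => hyny h'.1
    have h2 : x ∉ insert y (inN F y ∩ P) := by
      intro h'
      rcases h' with h' | h'
      · exact hxy h'
      · exact hxny h'.1
    have hsub : insert x (insert y (inN F y ∩ P)) ⊆ P := by
      intro u hu
      rcases hu with rfl | hu
      · exact hxP
      rcases hu with rfl | hu
      · exact hyP
      · exact hu.2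
    have hcard : (insert x (insert y (inN F y ∩ P))).ncard
        = (inN F y ∩ P).ncard + 1 + 1 := by
      rw [Set.ncard_insert_of_notMem h2 (finV _), Set.ncard_insert_of_notMem h1 (finV _)]
    have hle := Set.ncard_le_ncard hsub (finV P)
    omega
  -- medium vertices in P have many prey in P
  have hMedP : ∀ z ∈ Med ∩ P, M - 1 ≤ (inN F z ∩ P).ncard :=
    fun z hz => hcnt z hz.2 M (hmed z hz.1).2
  set l' := ((inN F x \ Q) ∩ P).ncard with hl'
  set m := (Med ∩ P).ncard with hm
  set s := (Small ∩ P).ncard with hs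
  have hm_le : m ≤ r - ℓ := by
    calc m ≤ Med.ncard := Set.ncard_le_ncard Set.inter_subset_left (finV _)
    _ = r - ℓ := hMcard
  have hs_le : s ≤ δ - r := by
    calc s ≤ Small.ncard := Set.ncard_le_ncard Set.inter_subset_left (finV _)
    _ = δ - r := hScard
  have hsubQ : Big ∪ Med ∪ Small ⊆ inN F x ∩ Q := hinx.ge
  -- decomposition of (inN F x ∩ P)
  have hdecomp : (inN F x ∩ P).ncard = m + s + l' := by
    have h1 : inN F x ∩ P = ((Med ∩ P) ∪ (Small ∩ P)) ∪ ((inN F x \ Q) ∩ P) := by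
      ext u
      constructor
      · rintro ⟨hu, huP⟩
        by_cases huQ : u ∈ Q
        · have hu2 : u ∈ Big ∪ Med ∪ Small := by rw [← hinx]; exact ⟨hu, huQ⟩
          rcases hu2 with (hB' | hM') | hS'
          · exact absurd (show u ∈ Big ∩ P from ⟨hB', huP⟩) (by rw [hBigP]; simp)
          · exact Or.inl (Or.inl ⟨hM', huP⟩)
          · exact Or.inl (Or.inr ⟨hS', huP⟩)
        · exact Or.inr ⟨⟨hu, huQ⟩, huP⟩
      · rintro ((⟨hu, huP⟩ | ⟨hu, huP⟩) | ⟨⟨hu, _⟩, huP⟩)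
        · exact ⟨(hsubQ (Or.inl (Or.inr hu))).1, huP⟩
        · exact ⟨(hsubQ (Or.inr hu)).1, huP⟩
        · exact ⟨hu, huP⟩
    have d1 : Disjoint (Med ∩ P) (Small ∩ P) :=
      hMS.mono Set.inter_subset_left Set.inter_subset_left
    have d2 : Disjoint ((Med ∩ P) ∪ (Small ∩ P)) ((inN F x \ Q) ∩ P) := by
      rw [Set.disjoint_left]
      rintro u hu ⟨⟨_, huQ⟩, _⟩
      rcases hu with ⟨hu, _⟩ | ⟨hu, _⟩
      · exact huQ (hMQ hu)
      · exact huQ (hSQ hu)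
    rw [h1, Set.ncard_union_eq d2 (finV _) (finV _), Set.ncard_union_eq d1 (finV _) (finV _)]
  -- total in-degree of x
  have hinx_card : (inN F x).ncard = (ℓ + (r - δ)) + ((r - ℓ) + (δ - r)) + δ := by
    have dBMS : Disjoint (Big ∪ Med) Small := Set.disjoint_union_left.mpr ⟨hBS, hMS⟩
    have h2 : (inN F x ∩ Q).ncard = (ℓ + (r - δ)) + ((r - ℓ) + (δ - r)) := by
      rw [hinx, Set.ncard_union_eq dBMS (finV _) (finV _),
        Set.ncard_union_eq hBM (finV _) (finV _), hBcard, hMcard, hScard]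
      omega
    have h3 := Set.ncard_inter_add_ncard_diff_eq_ncard (inN F x) Q (finV _)
    omega
  by_cases hmax : max δ r = 0
  · obtain ⟨hδ0, hr0⟩ : δ = 0 ∧ r = 0 := by omega
    subst hδ0; subst hr0
    constructor
    · omega
    · have hpos : 0 < (P ∩ Q).ncard := (Set.ncard_pos (finV _)).mpr ⟨x, hxP, hxQ⟩
      simp only [Nat.zero_sub, Nat.mul_zero, Nat.max_self]
      omega
  · -- main case
    have hne : inN F x ≠ ∅ := by
      intro he
      rw [he, Set.ncard_empty] at hinx_card
      omega
    have hhalf := hP x hxP hne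
    have hkey : max δ r ≤ m + s + l' := by omega
    refine ⟨by omega, ?_⟩
    -- Finset counting inside Q
    set Med' := (Med ∩ P).toFinset with hMed'
    have hMedFin : Med'.card = m := (Set.ncard_eq_toFinset_card' _).symm
    set K := Med'.biUnion (fun z => (inN F z ∩ P).toFinset) with hK
    have hKdisj : ∀ z1 ∈ Med', ∀ z2 ∈ Med', z1 ≠ z2 →
        Disjoint ((inN F z1 ∩ P).toFinset) ((inN F z2 ∩ P).toFinset) := by
      intro z1 h1 z2 h2 hne12
      rw [Set.disjoint_toFinset]
      exact (hleafdisj z1 (Or.inr (Set.mem_toFinset.mp h1).1) z2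
        (Or.inr (Set.mem_toFinset.mp h2).1) hne12).mono
        Set.inter_subset_left Set.inter_subset_left
    have hKcard : m * (M - 1) ≤ K.card := by
      rw [hK, Finset.card_biUnion hKdisj, ← hMedFin, ← smul_eq_mul]
      refine Finset.card_nsmul_le_sum _ _ _ (fun z hz => ?_)
      rw [← Set.ncard_eq_toFinset_card']
      exact hMedP z (Set.mem_toFinset.mp hz)
    set W := insert x ((Med ∩ P).toFinset ∪ (Small ∩ P).toFinset ∪ K) with hW
    have hKleaf : ∀ u ∈ K, ∃ z ∈ Med ∩ P, u ∈ inN F z ∩ P := by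
      intro u hu
      obtain ⟨z, hz, hu'⟩ := Finset.mem_biUnion.mp hu
      exact ⟨z, Set.mem_toFinset.mp hz, Set.mem_toFinset.mp hu'⟩
    have hxW : x ∉ (Med ∩ P).toFinset ∪ (Small ∩ P).toFinset ∪ K := by
      intro hx
      rcases Finset.mem_union.mp hx with hx | hx
      · rcases Finset.mem_union.mp hx with hx | hx
        · exact hxM (Set.mem_toFinset.mp hx).1
        · exact hxS (Set.mem_toFinset.mp hx).1
      · obtain ⟨z, hz, hu⟩ := hKleaf x hx
        exact (hleaf z (Or.inr hz.1) x hu.1).2.2 (Set.mem_insert _ _)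
    have d1' : Disjoint ((Med ∩ P).toFinset) ((Small ∩ P).toFinset) := by
      rw [Set.disjoint_toFinset]
      exact hMS.mono Set.inter_subset_left Set.inter_subset_left
    have d2' : Disjoint ((Med ∩ P).toFinset ∪ (Small ∩ P).toFinset) K := by
      rw [Finset.disjoint_left]
      intro u hu huK
      obtain ⟨z, hz, hu'⟩ := hKleaf u huK
      have hnot := (hleaf z (Or.inr hz.1) u hu'.1).2.2
      rcases Finset.mem_union.mp hu with hu | hu
      · exact hnot (Set.mem_insert_of_mem _ (Or.inl (Or.inr (Set.mem_toFinset.mp hu).1)))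
      · exact hnot (Set.mem_insert_of_mem _ (Or.inr (Set.mem_toFinset.mp hu).1))
    have hWcard : W.card = 1 + (m + s + K.card) := by
      rw [hW, Finset.card_insert_of_notMem hxW, Finset.card_union_of_disjoint d2',
        Finset.card_union_of_disjoint d1', hMedFin]
      have : ((Small ∩ P).toFinset).card = s := (Set.ncard_eq_toFinset_card' _).symm
      omega
    have hWsub : W ⊆ (P ∩ Q).toFinset := by
      intro u hu
      rw [Set.mem_toFinset]
      rcases Finset.mem_insert.mp hu with rfl | hu
      · exact ⟨hxP, hxQ⟩
      rcases Finset.mem_union.mp hu with hu | hu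
      · rcases Finset.mem_union.mp hu with hu | hu
        · have h' := Set.mem_toFinset.mp hu
          exact ⟨h'.2, hMQ h'.1⟩
        · have h' := Set.mem_toFinset.mp hu
          exact ⟨h'.2, hSQ h'.1⟩
      · obtain ⟨z, hz, hu'⟩ := hKleaf u hu
        exact ⟨hu'.2, (hmed z hz.1).1 hu'.1⟩
    have hfinal : W.card ≤ (P ∩ Q).ncard := by
      rw [Set.ncard_eq_toFinset_card']
      exact Finset.card_le_card hWsub
    have hmrl : r - l' ≤ m := by omega
    have hmulkey : (M - 1) * (r - l') ≤ (M - 1) * m := Nat.mul_le_mul_left _ hmrl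
    have hcomm : (M - 1) * m = m * (M - 1) := Nat.mul_comm _ _
    omega
end

section
/- Let Q be a quota widget of type Q(δ,ℓ,r,M) with root x inside a food web F, and let P be a ½-viable set containing at least ℓ' ≥ ℓ prey of x outside Q. Then there exists a ½-viable set P' that agrees with P outside Q, contains x, and contains exactly max(δ,r) − ℓ' + (M−1)·max(0, r−ℓ') vertices of Q other than x. -/
namespace Set

variable {ι α : Type*} [Finite α]

theorem ncard_biUnion_of_ncard_eq {t : Set ι} (ht : t.Finite) {s : ι → Set α} {k : ℕ}
    (hs : ∀ i ∈ t, (s i).ncard = k) (hst : t.PairwiseDisjoint s) :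
    (⋃ i ∈ t, s i).ncard = t.ncard * k := by
  rw [ht.ncard_biUnion (fun _ _ => toFinite _) hst, finsum_mem_congr rfl hs,
    finsum_mem_eq_finite_toFinset_sum _ ht, Finset.sum_const, smul_eq_mul,
    ncard_eq_toFinset_card t ht]

theorem exists_subset_biUnion_ncard_eq_mul {t : Set ι} (ht : t.Finite) {s : ι → Set α}
    {k : ℕ} (hk : ∀ i ∈ t, k ≤ (s i).ncard) (hst : t.PairwiseDisjoint s) :
    ∃ T ⊆ ⋃ i ∈ t, s i, T.ncard = t.ncard * k ∧ ∀ i ∈ t, k ≤ (s i ∩ T).ncard := by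
  choose! c hcs hck using fun i hi => exists_subset_card_eq (hk i hi)
  refine ⟨⋃ i ∈ t, c i, biUnion_mono subset_rfl hcs,
    ncard_biUnion_of_ncard_eq ht hck (hst.mono_on hcs), fun i hi => ?_⟩
  rw [← hck i hi]
  exact ncard_le_ncard (subset_inter (hcs i hi) (subset_biUnion_of_mem hi))

theorem ncard_inter_sdiff_union {A P Q S : Set α} (hSQ : S ⊆ Q) :
    (A ∩ (P \ Q ∪ S)).ncard = (A \ Q ∩ P).ncard + (A ∩ S).ncard := by
  have hsplit : A ∩ (P \ Q ∪ S) = A \ Q ∩ P ∪ A ∩ S := by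
    ext u
    simp only [mem_inter_iff, mem_union, mem_sdiff]
    tauto
  rw [hsplit, ncard_union_eq (disjoint_of_subset (inter_subset_left.trans
    (sdiff_subset_compl _ _)) (inter_subset_right.trans hSQ) disjoint_compl_left)]

end Set

section

open Set

variable {V : Type*} [Finite V] {F : V → V → Prop}

theorem HalfViable.sdiff_union_insert {P Q R : Set V} {x : V} (hP : HalfViable F P)
    (hR : HalfViable F R) (hRQ : R ⊆ Q) (hQ : ∀ u ∈ Q, u ≠ x → ∀ w, F u w → w ∈ Q)
    (hx : (inN F x).ncard ≤ 2 * ((inN F x \ Q ∩ P).ncard + (inN F x ∩ R).ncard)) :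
    HalfViable F (P \ Q ∪ insert x R) := by
  rintro w (⟨hwP, hwQ⟩ | rfl | hwR) hne
  · refine (hP w hwP hne).trans (Nat.mul_le_mul_left 2 (ncard_le_ncard ?_))
    rintro u ⟨huw, huP⟩
    refine ⟨huw, ?_⟩
    -- the only prey of `w ∉ Q` that can lie in `Q` is `x`, which is kept
    by_cases huQ : u ∈ Q
    · by_cases hux : u = x
      · exact .inr (.inl hux)
      · exact absurd (hQ u huQ hux w huw) hwQ
    · exact .inl ⟨huP, huQ⟩
  · rw [← ncard_inter_sdiff_union hRQ] at hx
    exact hx.trans (Nat.mul_le_mul_left 2 (ncard_le_ncard (inter_subset_inter_right _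
      (union_subset_union_right _ (subset_insert w R)))))
  · exact (hR w hwR hne).trans (Nat.mul_le_mul_left 2 (ncard_le_ncard
      (inter_subset_inter_right _ (subset_union_of_subset_right (subset_insert x R) _))))

theorem exists_halfViable_of_stars {x : V} {Med Small : Set V} {M s k : ℕ}
    (hs : s ≤ Small.ncard) (hk : k ≤ Med.ncard) (hMS : Disjoint Med Small)
    (hx : Small ∪ Med ⊆ inN F x) (hmed : ∀ m ∈ Med, (inN F m).ncard = 2 * (M - 1))
    (hsmall : ∀ u ∈ Small, inN F u = ∅) (hdisj : Med.PairwiseDisjoint (inN F))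
    (hleaf : ∀ m ∈ Med, ∀ u ∈ inN F m, inN F u = ∅ ∧ u ∉ Med ∪ Small) :
    ∃ R ⊆ Small ∪ Med ∪ ⋃ m ∈ Med, inN F m, HalfViable F R ∧
      R.ncard = s + k + k * (M - 1) ∧ s + k ≤ (inN F x ∩ R).ncard := by
  obtain ⟨S, hS, rfl⟩ := exists_subset_card_eq hs
  obtain ⟨C, hC, rfl⟩ := exists_subset_card_eq hk
  obtain ⟨T, hT, hTcard, hTC⟩ := exists_subset_biUnion_ncard_eq_mul (toFinite C)
    (fun m hm => (hmed m (hC hm)).symm ▸ Nat.le_mul_of_pos_left _ two_pos) (hdisj.subset hC)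
  have hTleaf : ∀ u ∈ T, ∃ m ∈ C, u ∈ inN F m := fun u hu => by
    simpa using hT hu
  have hSC : Disjoint S C := (hMS.mono hC hS).symm
  have hSCT : Disjoint (S ∪ C) T := disjoint_right.2 fun u hu => by
    obtain ⟨m, hm, hum⟩ := hTleaf u hu
    have hu := (hleaf m (hC hm) u hum).2
    rintro (h | h)
    exacts [hu (.inr (hS h)), hu (.inl (hC h))]
  refine ⟨S ∪ C ∪ T, union_subset_union (union_subset_union hS hC)
    (biUnion_subset_biUnion_left hC |>.trans' hT), ?_, ?_, ?_⟩
  · rintro w ((hwS | hwC) | hwT) hne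
    · exact absurd (hsmall w (hS hwS)) hne
    · rw [hmed w (hC hwC)]
      exact Nat.mul_le_mul_left 2 <| (hTC w hwC).trans <|
        ncard_le_ncard (inter_subset_inter_right _ subset_union_right)
    · obtain ⟨m, hm, hwm⟩ := hTleaf w hwT
      exact absurd (hleaf m (hC hm) w hwm).1 hne
  · rw [ncard_union_eq hSCT, ncard_union_eq hSC, hTcard]
  · rw [← ncard_union_eq hSC]
    exact ncard_le_ncard (subset_inter ((union_subset_union hS hC).trans hx)
      subset_union_left)

theorem ncard_inN_eq_two_mul_max {Q Big Med Small : Set V} {x : V} {δ ℓ r : ℕ}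
    (hlr : ℓ ≤ r) (hBM : Disjoint Big Med) (hBS : Disjoint Big Small) (hMS : Disjoint Med Small)
    (hBcard : Big.ncard = ℓ + (r - δ)) (hMcard : Med.ncard = r - ℓ)
    (hScard : Small.ncard = δ - r) (hinx : inN F x ∩ Q = Big ∪ Med ∪ Small)
    (hext : (inN F x \ Q).ncard = δ) :
    (inN F x).ncard = 2 * max δ r := by
  rw [← inter_union_sdiff (inN F x) Q, ncard_union_eq disjoint_sdiff_inter.symm, hext,
    hinx, ncard_union_eq (hBS.union_left hMS), ncard_union_eq hBM, hBcard, hMcard, hScard]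
  omega

end

theorem stmt_5_general {V : Type*} [Fintype V] (F : V → V → Prop)
    (M δ ℓ r : ℕ) (hlr : ℓ ≤ r)
    (x : V) (Q Big Med Small : Set V)
    (hxQ : x ∈ Q) (hMQ : Med ⊆ Q) (hSQ : Small ⊆ Q)
    (hxM : x ∉ Med) (hxS : x ∉ Small)
    (hBM : Disjoint Big Med) (hBS : Disjoint Big Small) (hMS : Disjoint Med Small)
    (hBcard : Big.ncard = ℓ + (r - δ))
    (hMcard : Med.ncard = r - ℓ)
    (hScard : Small.ncard = δ - r)
    (hinx : inN F x ∩ Q = Big ∪ Med ∪ Small)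
    (hext : (inN F x \ Q).ncard = δ)
    (hmed : ∀ m ∈ Med, inN F m ⊆ Q ∧ (inN F m).ncard = 2 * (M - 1))
    (hsmall : ∀ s ∈ Small, inN F s = ∅)
    (hleafdisj : ∀ a ∈ Big ∪ Med, ∀ b ∈ Big ∪ Med, a ≠ b → Disjoint (inN F a) (inN F b))
    (hleaf : ∀ a ∈ Big ∪ Med, ∀ u ∈ inN F a,
      inN F u = ∅ ∧ (∀ w, F u w → w = a) ∧ u ∉ insert x (Big ∪ Med ∪ Small))
    (hclosed : ∀ u ∈ Q, u ≠ x → ∀ w, (F u w → w ∈ Q) ∧ (F w u → w ∈ Q))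
    (P : Set V) (hP : HalfViable F P)
    (ℓ' : ℕ) (hℓ' : ℓ' = ((inN F x \ Q) ∩ P).ncard) (hℓℓ' : ℓ ≤ ℓ') :
    ∃ P' : Set V, HalfViable F P' ∧ x ∈ P' ∧
      (∀ w ∉ Q, (w ∈ P' ↔ w ∈ P)) ∧
      ((P' ∩ Q) \ {x}).ncard = (max δ r - ℓ') + (M - 1) * (r - ℓ') := by
  have hSMx : Small ∪ Med ⊆ inN F x := fun u hu =>
    (hinx.symm ▸ hu.elim (Or.inr ·) (Or.inl ∘ Or.inr) : u ∈ inN F x ∩ Q).1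
  obtain ⟨R, hRsub, hRviable, hRcard, hRroot⟩ := exists_halfViable_of_stars
    (s := δ - max ℓ' r) (k := r - ℓ') (by omega) (by omega) hMS hSMx
    (fun m hm => (hmed m hm).2) hsmall (fun a ha b hb hab => hleafdisj a (.inr ha) b (.inr hb) hab)
    (fun m hm u hu => ⟨(hleaf m (.inr hm) u hu).1,
      fun h => (hleaf m (.inr hm) u hu).2.2 (.inr (h.elim (.inl ∘ .inr) .inr))⟩)
  have hRQ : R ⊆ Q := hRsub.trans <|
    Set.union_subset (Set.union_subset hSQ hMQ) (Set.iUnion₂_subset fun m hm => (hmed m hm).1)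
  have hxR : x ∉ R := fun h => by
    rcases hRsub h with (h | h) | h
    · exact hxS h
    · exact hxM h
    · obtain ⟨m, hm, hxm⟩ := Set.mem_iUnion₂.1 h
      exact (hleaf m (.inr hm) x hxm).2.2 (Set.mem_insert x _)
  have hxRQ : insert x R ⊆ Q := Set.insert_subset hxQ hRQ
  refine ⟨P \ Q ∪ insert x R, hP.sdiff_union_insert hRviable hRQ
    (fun u hu hux w => (hclosed u hu hux w).1) ?_, .inr (Set.mem_insert x R),
    fun w hw => ⟨fun h => h.elim And.left fun h => absurd (hxRQ h) hw,
      fun h => .inl ⟨h, hw⟩⟩, ?_⟩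
  · rw [ncard_inN_eq_two_mul_max hlr hBM hBS hMS hBcard hMcard hScard hinx hext, ← hℓ']
    omega
  · rw [Set.union_inter_distrib_right, Set.sdiff_inter_self, Set.empty_union,
      Set.inter_eq_left.2 hxRQ, Set.insert_sdiff_self_of_notMem hxR, hRcard, mul_comm]
    omega

/-- Let `Q` be a quota widget of type Q(δ,ℓ,r,M) with root `x` inside a food
web `F`, and let `P` be a ½-viable set containing `ℓ' ≥ ℓ` prey of `x` outside `Q`.
Then there exists a ½-viable set `P'` that agrees with `P` outside `Q`, contains `x`,
and contains exactly `max(δ,r) − ℓ' + (M−1)·max(0, r−ℓ')` vertices of `Q` other than `x`. -/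
theorem stmt_5 {V : Type*} [Fintype V] (F : V → V → Prop) (hacyc : Acyclic F)
    (B M δ ℓ r : ℕ) (hB : 1 ≤ B) (hM : 1 ≤ M) (hlr : ℓ ≤ r)
    (x : V) (Q Big Med Small : Set V)
    (hxQ : x ∈ Q) (hBQ : Big ⊆ Q) (hMQ : Med ⊆ Q) (hSQ : Small ⊆ Q)
    (hxB : x ∉ Big) (hxM : x ∉ Med) (hxS : x ∉ Small)
    (hBM : Disjoint Big Med) (hBS : Disjoint Big Small) (hMS : Disjoint Med Small)
    (hBcard : Big.ncard = ℓ + (r - δ))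
    (hMcard : Med.ncard = r - ℓ)
    (hScard : Small.ncard = δ - r)
    (hinx : inN F x ∩ Q = Big ∪ Med ∪ Small)
    (hext : (inN F x \ Q).ncard = δ)
    (hbig : ∀ b ∈ Big, inN F b ⊆ Q ∧ (inN F b).ncard = 2 * (B - 1))
    (hmed : ∀ m ∈ Med, inN F m ⊆ Q ∧ (inN F m).ncard = 2 * (M - 1))
    (hsmall : ∀ s ∈ Small, inN F s = ∅)
    (hleafdisj : ∀ a ∈ Big ∪ Med, ∀ b ∈ Big ∪ Med, a ≠ b → Disjoint (inN F a) (inN F b))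
    (hleaf : ∀ a ∈ Big ∪ Med, ∀ u ∈ inN F a,
      inN F u = ∅ ∧ (∀ w, F u w → w = a) ∧ u ∉ insert x (Big ∪ Med ∪ Small))
    (hQ : Q = insert x (Big ∪ Med ∪ Small) ∪ (⋃ a ∈ Big ∪ Med, inN F a))
    (hclosed : ∀ u ∈ Q, u ≠ x → ∀ w, (F u w → w ∈ Q) ∧ (F w u → w ∈ Q))
    (P : Set V) (hP : HalfViable F P)
    (ℓ' : ℕ) (hℓ' : ℓ' = ((inN F x \ Q) ∩ P).ncard) (hℓℓ' : ℓ ≤ ℓ') :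
    ∃ P' : Set V, HalfViable F P' ∧ x ∈ P' ∧
      (∀ w ∉ Q, (w ∈ P' ↔ w ∈ P)) ∧
      ((P' ∩ Q) \ {x}).ncard = (max δ r - ℓ') + (M - 1) * (r - ℓ') :=
  stmt_5_general F M δ ℓ r hlr x Q Big Med Small hxQ hMQ hSQ hxM hxS hBM hBS hMS hBcard hMcard
    hScard hinx hext hmed hsmall hleafdisj hleaf hclosed P hP ℓ' hℓ' hℓℓ'
end

section
/- If G' is a φ-expansion of an undirected graph G with a = max over vertices v of φ(v), then tw(G') ≤ a·(tw(G)+1) − 1. -/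
/-- `(T, bags)` is a tree decomposition of the undirected graph `H`: `T` is a tree,
every edge of `H` is covered by some bag, and for every vertex the set of tree nodes
whose bag contains it induces a (nonempty) connected subgraph of `T`. -/
def IsTreeDecomp {V : Type*} {ι : Type} (H : SimpleGraph V) (T : SimpleGraph ι)
    (bags : ι → Set V) : Prop :=
  T.IsTree ∧
  (∀ u v : V, H.Adj u v → ∃ t, u ∈ bags t ∧ v ∈ bags t) ∧
  (∀ v : V, (T.induce {t | v ∈ bags t}).Connected)

/-- `H` has a tree decomposition of width at most `w`. -/
def HasTDWidth {V : Type*} (H : SimpleGraph V) (w : ℕ) : Prop :=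
  ∃ (ι : Type) (T : SimpleGraph ι) (bags : ι → Set V),
    IsTreeDecomp H T bags ∧ ∀ t, (bags t).ncard ≤ w + 1

/-- The treewidth of `H`: the minimum width of a tree decomposition of `H`. -/
noncomputable def treewidth {V : Type*} (H : SimpleGraph V) : ℕ :=
  sInf {w | HasTDWidth H w}

/-- The φ-expansion of `G`: each vertex `v` is replaced by a clique of size `φ v`, and
for every edge `{u,v}` of `G` every vertex of the clique of `u` is joined to every
vertex of the clique of `v`. -/
def expansion {V : Type*} (G : SimpleGraph V) (φ : V → ℕ) :
    SimpleGraph (Σ v : V, Fin (φ v)) :=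
  SimpleGraph.fromRel (fun x y => x.1 = y.1 ∨ G.Adj x.1 y.1)

lemma trivialTD {V : Type} [Fintype V] (G : SimpleGraph V) :
    HasTDWidth G (Fintype.card V) := by
  refine ⟨Unit, ⊥, fun _ => Set.univ, ⟨⟨?_, SimpleGraph.isAcyclic_bot⟩, ?_, ?_⟩, ?_⟩
  · constructor
    intro x y
    exact (Subsingleton.elim x y) ▸ SimpleGraph.Reachable.refl x
  · intro u v _; exact ⟨(), Set.mem_univ _, Set.mem_univ _⟩
  · intro v
    rw [SimpleGraph.connected_iff]
    refine ⟨fun x y => (Subsingleton.elim x y) ▸ SimpleGraph.Reachable.refl x, ⟨⟨(), trivial⟩⟩⟩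
  · intro t
    rw [Set.ncard_univ, Nat.card_eq_fintype_card]
    omega

/-- If `G'` is a φ-expansion of an undirected graph `G` with
`a = max over vertices v of φ(v)`, then `tw(G') ≤ a·(tw(G)+1) − 1`. -/
theorem stmt_6 {V : Type} [Fintype V] (G : SimpleGraph V) (φ : V → ℕ)
    (hφ : ∀ v, 1 ≤ φ v) (a : ℕ) (ha : a = Finset.univ.sup φ) :
    treewidth (expansion G φ) ≤ a * (treewidth G + 1) - 1 := by
  -- get an optimal tree decomposition of G
  have hmem : treewidth G ∈ {w | HasTDWidth G w} :=
    Nat.sInf_mem ⟨Fintype.card V, trivialTD G⟩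
  obtain ⟨ι, T, bags, ⟨htree, hcov, hconn⟩, hw⟩ := hmem
  set w := treewidth G with hwdef
  -- expanded bags
  set bags' : ι → Set (Σ v : V, Fin (φ v)) := fun t => {x | x.1 ∈ bags t} with hbags'
  have hφa : ∀ v : V, φ v ≤ a := fun v => ha ▸ Finset.le_sup (Finset.mem_univ v)
  -- width bound for expanded bags
  have hsize : ∀ t, (bags' t).ncard ≤ a * (w + 1) := by
    intro t
    have hprod : ((bags t) ×ˢ (Set.univ : Set (Fin a))).ncard = (bags t).ncard * a := by
      rw [← Nat.card_coe_set_eq, Nat.card_congr (Equiv.Set.prod _ _), Nat.card_prod,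
        Nat.card_coe_set_eq, Nat.card_coe_set_eq, Set.ncard_univ,
        Nat.card_eq_fintype_card, Fintype.card_fin]
    have hle : (bags' t).ncard ≤ ((bags t) ×ˢ (Set.univ : Set (Fin a))).ncard := by
      apply Set.ncard_le_ncard_of_injOn
        (fun x => (x.1, ⟨x.2.1, lt_of_lt_of_le x.2.2 (hφa x.1)⟩))
      · intro x hx; exact ⟨hx, Set.mem_univ _⟩
      · intro x _ y _ hxy
        have h1 : x.1 = y.1 := congrArg Prod.fst hxy
        have h2 : (x.2 : ℕ) = (y.2 : ℕ) := congrArg (fun p : V × Fin a => (p.2 : ℕ)) hxy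
        cases x; cases y
        cases h1
        simp_all [Fin.ext_iff]
    calc (bags' t).ncard ≤ (bags t).ncard * a := hprod ▸ hle
      _ ≤ (w + 1) * a := Nat.mul_le_mul_right a (hw t)
      _ = a * (w + 1) := Nat.mul_comm _ _
  -- build the tree decomposition of the expansion
  have hHT : HasTDWidth (expansion G φ) (a * (w + 1) - 1) := by
    refine ⟨ι, T, bags', ⟨htree, ?_, ?_⟩, ?_⟩
    · intro x y hxy
      rw [expansion, SimpleGraph.fromRel_adj] at hxy
      obtain ⟨-, h | h⟩ := hxy
      · rcases h with h | h
        · obtain ⟨⟨t, ht⟩⟩ := (hconn x.1).nonempty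
          exact ⟨t, ht, by simpa [bags', ← h] using ht⟩
        · obtain ⟨t, h1, h2⟩ := hcov _ _ h
          exact ⟨t, h1, h2⟩
      · rcases h with h | h
        · obtain ⟨⟨t, ht⟩⟩ := (hconn x.1).nonempty
          exact ⟨t, ht, by simpa [bags', h] using ht⟩
        · obtain ⟨t, h1, h2⟩ := hcov _ _ h.symm
          exact ⟨t, h1, h2⟩
    · intro x
      exact hconn x.1
    · intro t
      have := hsize t
      omega
  exact Nat.sInf_le hHT
end

section
/- In a tree extension T of a DAG F, for every vertex v of T: (a) the set of in-neighbours of v in F is contained in A_v, and (b) for every child w of v in T, A_w ⊆ A_v ∪ {v}, where A_u denotes the set of proper ancestors of u in T that have an out-neighbour in F among the descendants of u in T. -/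
/-- A rooted tree on the vertex set `V`, given by its root and parent function
(the parent of the root is the root itself, and every vertex reaches the root by
iterating the parent function). -/
structure RTree (V : Type*) where
  root : V
  parent : V → V
  parent_root : parent root = root
  reach : ∀ v, ∃ n, parent^[n] v = root

namespace RTree

variable {V : Type*}

/-- `u` is an ancestor of `v` (possibly `u = v`). -/
def anc (T : RTree V) (u v : V) : Prop := ∃ n, T.parent^[n] v = u

/-- `u` is a proper ancestor of `v`. -/
def panc (T : RTree V) (u v : V) : Prop := T.anc u v ∧ u ≠ v

/-- The set of descendants of `v` in `T`, including `v` itself. -/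
def Z (T : RTree V) (v : V) : Set V := {w | T.anc v w}

end RTree

/-- `T` is a tree extension of the DAG `F`: for every arc `(u,v)` of `F`, `u` is a
proper ancestor of `v` in `T`. -/
def IsTreeExt {V : Type*} (F : V → V → Prop) (T : RTree V) : Prop :=
  ∀ u v, F u v → T.panc u v

/-- `A_v`: the set of proper ancestors of `v` in `T` that have an out-neighbour in `F`
among the descendants of `v` in `T`. -/
def Aset {V : Type*} (F : V → V → Prop) (T : RTree V) (v : V) : Set V :=
  {a | T.panc a v ∧ ∃ w, F a w ∧ w ∈ T.Z v}

/-- In a tree extension `T` of a DAG `F`, for every vertex `v`: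
(a) the set of in-neighbours of `v` in `F` is contained in `A_v`, and
(b) for every child `w` of `v` in `T`, `A_w ⊆ A_v ∪ {v}`. -/
theorem stmt_12 {V : Type} [Fintype V] (F : V → V → Prop) (hacyc : Acyclic F)
    (T : RTree V) (hT : IsTreeExt F T) (v : V) :
    inN F v ⊆ Aset F T v ∧
    ∀ w, T.parent w = v → w ≠ T.root → Aset F T w ⊆ Aset F T v ∪ {v} := by
  constructor
  · intro u hu
    exact ⟨hT u v hu, v, hu, ⟨0, rfl⟩⟩
  · intro w hw _ a ⟨⟨⟨n, hn⟩, haw⟩, x, hfx, m, hm⟩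
    by_cases hav : a = v
    · exact Or.inr hav
    · left
      cases n with
      | zero => exact (haw hn.symm).elim
      | succ k =>
        refine ⟨⟨⟨k, ?_⟩, hav⟩, x, hfx, m + 1, ?_⟩
        · rw [Function.iterate_succ_apply, hw] at hn; exact hn
        · rw [Function.iterate_succ_apply', hm]; exact hw
end

section
/- Let F be a food web with arc weights γ and diversity function d : X → ℕ⁺, T a tree extension of F with root ρ, and B ∈ ℕ. Then the maximum of d(P) over all γ-viable sets P ⊆ X of size at most B equals the maximum of d(P) over all (ρ,∅,B)-compatible sets P (with the convention that the maximum over an empty collection is −∞), assuming B ≤ |X|. -/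
/-- `γ_w(S)`: the total weight of arcs `(u,w)` of `F` with `u ∈ S`. -/
noncomputable def gam {V : Type*} (F : V → V → Prop) (γ : V → V → ℝ) (w : V)
    (S : Set V) : ℝ :=
  ∑ᶠ u ∈ S ∩ inN F w, γ u w

/-- `P ⊆ Z_v` is `(v,A',ℓ)`-compatible: `|P| = ℓ` and every `w ∈ P` is a source of `F`
or satisfies `γ_w(P ∪ A') ≥ 1`. -/
def Compat {V : Type*} (F : V → V → Prop) (γ : V → V → ℝ) (T : RTree V) (v : V)
    (A' : Set V) (ℓ : ℕ) (P : Set V) : Prop :=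
  P ⊆ T.Z v ∧ P.ncard = ℓ ∧ ∀ w ∈ P, inN F w = ∅ ∨ 1 ≤ gam F γ w (P ∪ A')

/-- `S` is `γ`-viable: every non-source vertex `w ∈ S` satisfies `γ_w(S) ≥ 1`. -/
def Viable {V : Type*} (F : V → V → Prop) (γ : V → V → ℝ) (S : Set V) : Prop :=
  ∀ w ∈ S, inN F w ≠ ∅ → 1 ≤ gam F γ w S

/-- The total diversity of `P`. -/
noncomputable def dsum {V : Type*} (d : V → ℕ) (P : Set V) : ℕ := ∑ᶠ u ∈ P, d u

lemma gam_mono {V : Type} [Fintype V] (F : V → V → Prop) (γ : V → V → ℝ)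
    (hγ : ∀ u v, F u v → 0 < γ u v) (w : V) {S S' : Set V} (h : S ⊆ S') :
    gam F γ w S ≤ gam F γ w S' := by
  unfold gam
  rw [finsum_mem_eq_sum _ (Set.toFinite _), finsum_mem_eq_sum _ (Set.toFinite _)]
  apply Finset.sum_le_sum_of_subset_of_nonneg
  · intro x hx
    simp only [Set.Finite.mem_toFinset, Set.mem_inter_iff] at *
    exact ⟨⟨h hx.1.1, hx.1.2⟩, hx.2⟩
  · intro i hi _
    simp only [Set.Finite.mem_toFinset, Set.mem_inter_iff] at hi
    exact (hγ i w hi.1.2).le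

lemma dsum_mono {V : Type} [Fintype V] (d : V → ℕ) {S S' : Set V} (h : S ⊆ S') :
    dsum d S ≤ dsum d S' := by
  unfold dsum
  rw [finsum_mem_eq_sum _ (Set.toFinite _), finsum_mem_eq_sum _ (Set.toFinite _)]
  apply Finset.sum_le_sum_of_subset
  intro x hx
  simp only [Set.Finite.mem_toFinset, Set.mem_inter_iff] at *
  exact ⟨h hx.1, hx.2⟩

lemma gam_congr {V : Type} (F : V → V → Prop) (γ : V → V → ℝ) (w : V) {S S' : Set V}
    (h : S ∩ inN F w = S' ∩ inN F w) : gam F γ w S = gam F γ w S' := by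
  unfold gam; rw [h]

/-- Extension step: a proper subset can be enlarged by a vertex whose in-neighbours
all lie in the set. -/
lemma exists_ext {V : Type} [Fintype V] (F : V → V → Prop) (hacyc : Acyclic F)
    {S : Set V} (h : S ≠ Set.univ) : ∃ w ∉ S, inN F w ⊆ S := by
  have hirr : IsIrrefl V (Relation.TransGen F) := ⟨hacyc⟩
  have hwf : WellFounded (Relation.TransGen F) :=
    Finite.wellFounded_of_trans_of_irrefl _
  have hne : Sᶜ.Nonempty := by
    rw [Set.nonempty_compl]; exact h
  obtain ⟨w, hw, hmin⟩ := hwf.has_min Sᶜ hne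
  refine ⟨w, hw, fun u hu => ?_⟩
  by_contra hc
  exact hmin u hc (Relation.TransGen.single hu)

/-- Any viable set can be extended to a viable set of any larger cardinality (within
the bounds of the vertex set) without decreasing diversity. -/
lemma extend_to {V : Type} [Fintype V] (F : V → V → Prop) (hacyc : Acyclic F)
    (γ : V → V → ℝ) (hγ : ∀ u v, F u v → 0 < γ u v)
    (hfull : ∀ v : V, inN F v ≠ ∅ → 1 ≤ gam F γ v Set.univ) (d : V → ℕ) :
    ∀ k (S : Set V), Viable F γ S → S.ncard + k ≤ Fintype.card V →
      ∃ P, Viable F γ P ∧ P.ncard = S.ncard + k ∧ dsum d S ≤ dsum d P := by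
  intro k
  induction k with
  | zero => exact fun S hS _ => ⟨S, hS, rfl, le_refl _⟩
  | succ k ih =>
    intro S hS hcard
    have hne : S ≠ Set.univ := by
      intro heq
      rw [heq, Set.ncard_univ, Nat.card_eq_fintype_card] at hcard
      omega
    obtain ⟨w, hw, hsub⟩ := exists_ext F hacyc hne
    have hins : Viable F γ (insert w S) := by
      intro v hv hvne
      rcases hv with rfl | hv
      · have : insert v S ∩ inN F v = Set.univ ∩ inN F v := by
          ext x
          simp only [Set.mem_inter_iff, Set.mem_univ, true_and]
          exact ⟨fun h => h.2, fun h => ⟨Or.inr (hsub h), h⟩⟩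
        rw [gam_congr F γ v this]
        exact hfull v hvne
      · exact le_trans (hS v hv hvne) (gam_mono F γ hγ v (Set.subset_insert w S))
    have hcard' : (insert w S).ncard = S.ncard + 1 :=
      Set.ncard_insert_of_notMem hw (Set.toFinite S)
    obtain ⟨P, hP, hPcard, hPd⟩ := ih (insert w S) hins (by omega)
    exact ⟨P, hP, by omega, le_trans (dsum_mono d (Set.subset_insert w S)) hPd⟩

/-- Let `F` be a food web with arc weights `γ` and diversity function
`d : X → ℕ⁺`, `T` a tree extension of `F` with root `ρ`, and `B ∈ ℕ` with `B ≤ |X|`.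
Then the maximum of `d(P)` over all `γ`-viable sets `P ⊆ X` of size at most `B` equals
the maximum of `d(P)` over all `(ρ,∅,B)`-compatible sets `P` (the maximum over an empty
collection being `−∞ = ⊥` in `EReal`). -/
theorem stmt_14 {V : Type} [Fintype V] (F : V → V → Prop) (hacyc : Acyclic F)
    (γ : V → V → ℝ) (hγ : ∀ u v, F u v → 0 < γ u v ∧ γ u v ≤ 1)
    (hfull : ∀ v : V, inN F v ≠ ∅ → 1 ≤ gam F γ v Set.univ)
    (d : V → ℕ) (hd : ∀ v, 1 ≤ d v)
    (T : RTree V) (hT : IsTreeExt F T)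
    (B : ℕ) (hB : B ≤ Fintype.card V) :
    sSup {x : EReal | ∃ P : Set V, Viable F γ P ∧ P.ncard ≤ B ∧ x = (dsum d P : ℕ)} =
    sSup {x : EReal | ∃ P : Set V, Compat F γ T T.root ∅ B P ∧ x = (dsum d P : ℕ)} := by
  have hγpos : ∀ u v, F u v → 0 < γ u v := fun u v h => (hγ u v h).1
  apply le_antisymm
  · -- each viable set of size ≤ B extends to a compatible one of size B
    apply sSup_le
    rintro x ⟨P, hPv, hPcard, rfl⟩
    obtain ⟨P', hP'v, hP'card, hP'd⟩ :=
      extend_to F hacyc γ hγpos hfull d (B - P.ncard) P hPv (by omega)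
    have hP'B : P'.ncard = B := by omega
    have hcompat : Compat F γ T T.root ∅ B P' := by
      refine ⟨fun w _ => T.reach w, hP'B, fun w hw => ?_⟩
      by_cases hne : inN F w = ∅
      · exact Or.inl hne
      · right
        rw [Set.union_empty]
        exact hP'v w hw hne
    refine le_trans ?_ (le_sSup ⟨P', hcompat, rfl⟩)
    exact_mod_cast dsum_mono d (fun x hx => hx) |>.trans hP'd
  · -- each compatible set is viable of size ≤ B
    apply sSup_le_sSup
    rintro x ⟨P, ⟨_, hPcard, hPcond⟩, rfl⟩
    refine ⟨P, fun w hw hne => ?_, le_of_eq hPcard, rfl⟩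
    rcases hPcond w hw with h | h
    · exact absurd h hne
    · rwa [Set.union_empty] at h
end

section
/- Dynamic-programming correctness at internal nodes: with S[v,A',ℓ] defined as the maximum diversity d(P) over all (v,A',ℓ)-compatible sets P ⊆ Z_v (or −∞ if none exists), for an internal node v of T with children w₁,…,w_t one has S[v,A',ℓ] = max over P₀ ∈ 𝒫₀(A') and nonnegative integers ℓ₁,…,ℓ_t with |P₀| + Σᵢ ℓᵢ = ℓ of d(P₀) + Σᵢ S[wᵢ, A_{wᵢ} ∩ (A' ∪ P₀), ℓᵢ], where 𝒫₀(A') = {∅, {v}} if v is a source of F or γ_v(A') ≥ 1, and 𝒫₀(A') = {∅} otherwise. -/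
/-- The dynamic-programming table entry `S[v,A',ℓ]`: the maximum diversity `d(P)` over
all `(v,A',ℓ)`-compatible sets `P ⊆ Z_v`, or `⊥ = −∞` if none exists. -/
noncomputable def Sval {V : Type*} (F : V → V → Prop) (γ : V → V → ℝ) (d : V → ℕ)
    (T : RTree V) (v : V) (A' : Set V) (ℓ : ℕ) : EReal :=
  sSup {x : EReal | ∃ P : Set V, Compat F γ T v A' ℓ P ∧ x = (dsum d P : ℕ)}

/-!
A set `P ⊆ Z_v` splits uniquely as `P₀ = P ∩ {v}` together with the pieces `P ∩ Z_{wᵢ}`,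
and diversity and cardinality add up over this split. Compatibility splits as well: an arc
into a vertex of `Z_{wᵢ}` comes from a proper ancestor in `T`, i.e. from `Z_{wᵢ}` itself or
from `A_{wᵢ}`, and the only such ancestor that can lie in `P` outside `Z_{wᵢ}` is `v`; an arc
into `v` comes from outside `Z_v`, hence from `A'`. So `P` is compatible exactly when `P₀` is
admissible and every piece is compatible for its child, and the maximum over `P` is the
maximum over `P₀` and the `ℓᵢ` of the sum of the children's maxima.
-/

namespace RTree

variable {V : Type*} {T : RTree V} {u v x c c' : V}

theorem anc_refl (T : RTree V) (v : V) : T.anc v v := ⟨0, rfl⟩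

theorem anc_trans (h₁ : T.anc u v) (h₂ : T.anc v x) : T.anc u x := by
  obtain ⟨n, rfl⟩ := h₁
  obtain ⟨m, rfl⟩ := h₂
  exact ⟨n + m, Function.iterate_add_apply _ _ _ _⟩

theorem anc_parent (T : RTree V) (c : V) : T.anc (T.parent c) c := ⟨1, rfl⟩

theorem eq_root_of_parent_eq_self (h : T.parent x = x) : x = T.root := by
  obtain ⟨n, hn⟩ := T.reach x
  rwa [Function.iterate_fixed h] at hn

-- Mutual ancestors lie on a cycle of `parent`, and the only cycle is the fixed point `root`.
theorem anc_antisymm (h₁ : T.anc u v) (h₂ : T.anc v u) : u = v := by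
  obtain ⟨n, rfl⟩ := h₁
  obtain ⟨m, hm⟩ := h₂
  rcases Nat.eq_zero_or_pos n with rfl | hn
  · rfl
  have hper : Function.IsPeriodicPt T.parent (m + n) v := by
    rw [Function.IsPeriodicPt, Function.IsFixedPt, Function.iterate_add_apply, hm]
  obtain ⟨k, hk⟩ := T.reach v
  have hv : v = T.root := by
    rw [← (hper.mul_const k).eq, (Nat.sub_add_cancel (Nat.le_mul_of_pos_left k (by omega))).symm,
      Function.iterate_add_apply, hk, Function.iterate_fixed T.parent_root]
  rw [hv, Function.iterate_fixed T.parent_root]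

theorem anc_total (h₁ : T.anc u x) (h₂ : T.anc c x) : T.anc u c ∨ T.anc c u := by
  obtain ⟨n, rfl⟩ := h₁
  obtain ⟨m, rfl⟩ := h₂
  rcases le_total n m with h | h
  · exact Or.inr ⟨m - n, by rw [← Function.iterate_add_apply, Nat.sub_add_cancel h]⟩
  · exact Or.inl ⟨n - m, by rw [← Function.iterate_add_apply, Nat.sub_add_cancel h]⟩

theorem anc_parent_of_anc_of_ne (h : T.anc u c) (hne : u ≠ c) : T.anc u (T.parent c) := by
  obtain ⟨_ | k, rfl⟩ := h
  · exact absurd rfl hne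
  · exact ⟨k, (Function.iterate_succ_apply _ _ _).symm⟩

theorem notMem_Z_of_panc (h : T.panc u v) : u ∉ T.Z v :=
  fun hu => h.2 (anc_antisymm h.1 hu)

theorem panc_of_anc_of_notMem_Z (hux : T.anc u x) (hx : x ∈ T.Z c) (hu : u ∉ T.Z c) :
    T.panc u c := by
  rcases anc_total hux hx with h | h
  · exact ⟨h, by rintro rfl; exact hu (anc_refl T u)⟩
  · exact absurd h hu

theorem Z_subset_Z_parent (T : RTree V) (c : V) : T.Z c ⊆ T.Z (T.parent c) :=
  fun _ hx => anc_trans (anc_parent T c) hx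

theorem parent_ne_self (hc : c ≠ T.root) : T.parent c ≠ c :=
  fun h => hc (eq_root_of_parent_eq_self h)

theorem parent_notMem_Z (hc : c ≠ T.root) : T.parent c ∉ T.Z c :=
  fun h => parent_ne_self hc (anc_antisymm (anc_parent T c) h)

theorem eq_parent_of_panc_of_mem_Z (h : T.panc u c) (hu : u ∈ T.Z (T.parent c)) :
    u = T.parent c :=
  anc_antisymm (anc_parent_of_anc_of_ne h.1 h.2) hu

theorem not_anc_of_parent_eq (hc : c ≠ T.root) (hpar : T.parent c = T.parent c')
    (hne : c ≠ c') : ¬ T.anc c c' := fun h =>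
  parent_ne_self hc (anc_antisymm (anc_parent T c) (hpar ▸ anc_parent_of_anc_of_ne h hne))

theorem disjoint_Z_of_parent_eq (hc : c ≠ T.root) (hc' : c' ≠ T.root)
    (hpar : T.parent c = T.parent c') (hne : c ≠ c') : Disjoint (T.Z c) (T.Z c') :=
  Set.disjoint_left.2 fun _ hx hx' => (anc_total hx hx').elim
    (not_anc_of_parent_eq hc hpar hne) (not_anc_of_parent_eq hc' hpar.symm hne.symm)

theorem exists_child_anc (h : T.anc v x) (hne : x ≠ v) :
    ∃ c, T.parent c = v ∧ c ≠ T.root ∧ T.anc c x := by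
  obtain ⟨n, hn⟩ := h
  induction n generalizing x with
  | zero => exact absurd hn hne
  | succ n ih =>
    rw [Function.iterate_succ_apply] at hn
    by_cases hpx : T.parent x = v
    · refine ⟨x, hpx, fun hx => hne ?_, anc_refl T x⟩
      rw [← hpx, hx, T.parent_root]
    · obtain ⟨c, hc, hcr, hcx⟩ := ih hpx hn
      exact ⟨c, hc, hcr, anc_trans hcx (anc_parent T x)⟩

section Children

variable {t : ℕ} {w : Fin t → V}

theorem notMem_Z_child (hchild : ∀ i, T.parent (w i) = v ∧ w i ≠ T.root) (i : Fin t) :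
    v ∉ T.Z (w i) :=
  (hchild i).1 ▸ parent_notMem_Z (hchild i).2

theorem Z_child_subset (hchild : ∀ i, T.parent (w i) = v ∧ w i ≠ T.root) (i : Fin t) :
    T.Z (w i) ⊆ T.Z v :=
  (hchild i).1 ▸ Z_subset_Z_parent T (w i)

theorem pairwise_disjoint_Z_children (hchild : ∀ i, T.parent (w i) = v ∧ w i ≠ T.root)
    (hinj : Function.Injective w) : Pairwise (Function.onFun Disjoint fun i => T.Z (w i)) :=
  fun i j hij => disjoint_Z_of_parent_eq (hchild i).2 (hchild j).2
    ((hchild i).1.trans (hchild j).1.symm) (hinj.ne hij)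

theorem Z_eq_insert_iUnion_Z_children (hchild : ∀ i, T.parent (w i) = v ∧ w i ≠ T.root)
    (hall : ∀ u, T.parent u = v → u ≠ T.root → ∃ i, w i = u) :
    T.Z v = insert v (⋃ i, T.Z (w i)) := by
  ext x
  refine ⟨fun hx => ?_, ?_⟩
  · by_cases hxv : x = v
    · exact Or.inl hxv
    obtain ⟨c, hc, hcr, hcx⟩ := exists_child_anc hx hxv
    obtain ⟨i, rfl⟩ := hall c hc hcr
    exact Or.inr (Set.mem_iUnion.2 ⟨i, hcx⟩)
  · rintro (rfl | hx)
    · exact anc_refl T x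
    · obtain ⟨i, hi⟩ := Set.mem_iUnion.1 hx
      exact Z_child_subset hchild i hi

end Children

end RTree

section Split

variable {V : Type*} {T : RTree V} {v : V} {t : ℕ} {w : Fin t → V} {P : Set V}

theorem finsum_mem_eq_add_sum_children [Finite V] {M : Type*} [AddCommMonoid M] (f : V → M)
    (hchild : ∀ i, T.parent (w i) = v ∧ w i ≠ T.root) (hinj : Function.Injective w)
    (hall : ∀ u, T.parent u = v → u ≠ T.root → ∃ i, w i = u) (hP : P ⊆ T.Z v) :
    ∑ᶠ u ∈ P, f u = ∑ᶠ u ∈ P ∩ {v}, f u + ∑ i, ∑ᶠ u ∈ P ∩ T.Z (w i), f u := by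
  have hsplit : P = P ∩ {v} ∪ ⋃ i, P ∩ T.Z (w i) := by
    rw [← Set.inter_iUnion, ← Set.inter_union_distrib_left, ← Set.insert_eq,
      ← RTree.Z_eq_insert_iUnion_Z_children hchild hall, Set.inter_eq_left.2 hP]
  have hdisj_v : Disjoint (P ∩ {v}) (⋃ i, P ∩ T.Z (w i)) :=
    Set.disjoint_iUnion_right.2 fun i => Set.disjoint_left.2 fun _ hx hx' =>
      RTree.notMem_Z_child hchild i (Set.mem_singleton_iff.1 hx.2 ▸ hx'.2)
  have hdisj_children : Pairwise (Function.onFun Disjoint fun i => P ∩ T.Z (w i)) :=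
    fun i j hij => (RTree.pairwise_disjoint_Z_children hchild hinj hij).mono
      Set.inter_subset_right Set.inter_subset_right
  calc ∑ᶠ u ∈ P, f u = ∑ᶠ u ∈ P ∩ {v} ∪ ⋃ i, P ∩ T.Z (w i), f u := by rw [← hsplit]
    _ = _ := by
      rw [finsum_mem_union hdisj_v (Set.toFinite _) (Set.toFinite _),
        finsum_mem_iUnion hdisj_children fun i => Set.toFinite _]
      exact congrArg _ (finsum_eq_sum_of_fintype _)

theorem ncard_eq_add_sum_children [Finite V]
    (hchild : ∀ i, T.parent (w i) = v ∧ w i ≠ T.root) (hinj : Function.Injective w)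
    (hall : ∀ u, T.parent u = v → u ≠ T.root → ∃ i, w i = u) (hP : P ⊆ T.Z v) :
    P.ncard = (P ∩ {v}).ncard + ∑ i, (P ∩ T.Z (w i)).ncard := by
  simp only [← finsum_one]
  exact finsum_mem_eq_add_sum_children (fun _ => 1) hchild hinj hall hP

theorem dsum_eq_add_sum_children [Finite V] (d : V → ℕ)
    (hchild : ∀ i, T.parent (w i) = v ∧ w i ≠ T.root) (hinj : Function.Injective w)
    (hall : ∀ u, T.parent u = v → u ≠ T.root → ∃ i, w i = u) (hP : P ⊆ T.Z v) :
    dsum d P = dsum d (P ∩ {v}) + ∑ i, dsum d (P ∩ T.Z (w i)) :=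
  finsum_mem_eq_add_sum_children d hchild hinj hall hP

variable {P₀ : Set V} {Q : Fin t → Set V}

theorem union_iUnion_subset_Z (hchild : ∀ i, T.parent (w i) = v ∧ w i ≠ T.root)
    (hP₀ : P₀ ⊆ {v}) (hQ : ∀ i, Q i ⊆ T.Z (w i)) : P₀ ∪ ⋃ i, Q i ⊆ T.Z v := by
  rintro x (hx | hx)
  · rw [hP₀ hx]
    exact RTree.anc_refl T v
  · obtain ⟨i, hi⟩ := Set.mem_iUnion.1 hx
    exact RTree.Z_child_subset hchild i (hQ i hi)

theorem union_iUnion_inter_singleton (hchild : ∀ i, T.parent (w i) = v ∧ w i ≠ T.root)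
    (hP₀ : P₀ ⊆ {v}) (hQ : ∀ i, Q i ⊆ T.Z (w i)) : (P₀ ∪ ⋃ i, Q i) ∩ {v} = P₀ := by
  ext x
  refine ⟨?_, fun hx => ⟨Or.inl hx, hP₀ hx⟩⟩
  rintro ⟨hx | hx, rfl⟩
  · exact hx
  · obtain ⟨i, hi⟩ := Set.mem_iUnion.1 hx
    exact absurd (hQ i hi) (RTree.notMem_Z_child hchild i)

theorem union_iUnion_inter_Z_child (hchild : ∀ i, T.parent (w i) = v ∧ w i ≠ T.root)
    (hinj : Function.Injective w) (hP₀ : P₀ ⊆ {v}) (hQ : ∀ i, Q i ⊆ T.Z (w i)) (i : Fin t) :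
    (P₀ ∪ ⋃ j, Q j) ∩ T.Z (w i) = Q i := by
  ext x
  refine ⟨?_, fun hx => ⟨Or.inr (Set.mem_iUnion.2 ⟨i, hx⟩), hQ i hx⟩⟩
  rintro ⟨hx | hx, hxi⟩
  · rw [hP₀ hx] at hxi
    exact absurd hxi (RTree.notMem_Z_child hchild i)
  · obtain ⟨j, hj⟩ := Set.mem_iUnion.1 hx
    obtain rfl | hji := eq_or_ne j i
    · exact hj
    · exact absurd hxi (Set.disjoint_left.1
        (RTree.pairwise_disjoint_Z_children hchild hinj hji) (hQ j hj))

theorem dsum_union_iUnion [Finite V] (d : V → ℕ)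
    (hchild : ∀ i, T.parent (w i) = v ∧ w i ≠ T.root) (hinj : Function.Injective w)
    (hall : ∀ u, T.parent u = v → u ≠ T.root → ∃ i, w i = u)
    (hP₀ : P₀ ⊆ {v}) (hQ : ∀ i, Q i ⊆ T.Z (w i)) :
    dsum d (P₀ ∪ ⋃ i, Q i) = dsum d P₀ + ∑ i, dsum d (Q i) := by
  rw [dsum_eq_add_sum_children d hchild hinj hall (union_iUnion_subset_Z hchild hP₀ hQ),
    union_iUnion_inter_singleton hchild hP₀ hQ]
  simp only [union_iUnion_inter_Z_child hchild hinj hP₀ hQ]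

end Split

section TreeExtension

variable {V : Type*} {F : V → V → Prop} {γ : V → V → ℝ} {T : RTree V} {v x c : V}
  {A P : Set V}

-- In-neighbours are proper ancestors in a tree extension, so none of them lies in `Z_x`.
theorem gam_union_of_subset_Z (hT : IsTreeExt F T) (hP : P ⊆ T.Z x) :
    gam F γ x (P ∪ A) = gam F γ x A := by
  have hPx : P ∩ inN F x = ∅ := Set.eq_empty_of_forall_notMem fun u hu =>
    RTree.notMem_Z_of_panc (hT u x hu.2) (hP hu.1)
  rw [gam, gam, Set.union_inter_distrib_right, hPx, Set.empty_union]

theorem gam_union_eq_gam_child (hT : IsTreeExt F T) (hc : T.parent c = v)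
    (hP : P ⊆ T.Z v) (hA : A ⊆ Aset F T v) (hx : x ∈ T.Z c) :
    gam F γ x (P ∪ A) = gam F γ x (P ∩ T.Z c ∪ Aset F T c ∩ (A ∪ P ∩ {v})) := by
  suffices h : (P ∪ A) ∩ inN F x = (P ∩ T.Z c ∪ Aset F T c ∩ (A ∪ P ∩ {v})) ∩ inN F x by
    rw [gam, gam, h]
  ext u
  refine ⟨?_, ?_⟩
  · rintro ⟨hu, hux⟩
    refine ⟨?_, hux⟩
    have hAset : u ∉ T.Z c → u ∈ Aset F T c := fun huc =>
      ⟨RTree.panc_of_anc_of_notMem_Z (hT u x hux).1 hx huc, x, hux, hx⟩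
    rcases hu with hu | hu
    · by_cases huc : u ∈ T.Z c
      · exact Or.inl ⟨hu, huc⟩
      · refine Or.inr ⟨hAset huc, Or.inr ⟨hu, ?_⟩⟩
        rw [Set.mem_singleton_iff, ← hc]
        exact RTree.eq_parent_of_panc_of_mem_Z (hAset huc).1 (hc ▸ hP hu)
    · have huc : u ∉ T.Z c := fun huc =>
        RTree.notMem_Z_of_panc (hA hu).1 (hc ▸ RTree.Z_subset_Z_parent T c huc)
      exact Or.inr ⟨hAset huc, Or.inl hu⟩
  · rintro ⟨hu | ⟨-, hu | hu⟩, hux⟩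
    exacts [⟨Or.inl hu.1, hux⟩, ⟨Or.inr hu, hux⟩, ⟨Or.inl hu.1, hux⟩]

end TreeExtension

theorem inter_singleton_eq_empty_or_iff {V : Type*} {P : Set V} {v : V} {p : Prop} :
    P ∩ {v} = ∅ ∨ (P ∩ {v} = {v} ∧ p) ↔ (v ∈ P → p) := by
  by_cases hv : v ∈ P
  · simp [hv]
  · simp [hv, Set.inter_singleton_eq_empty.2 hv]

section Compat

variable {V : Type*} {F : V → V → Prop} {γ : V → V → ℝ} {T : RTree V} {v : V}
  {t : ℕ} {w : Fin t → V} {A P : Set V} {ℓ : ℕ}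

theorem compat_iff_of_subset_Z [Finite V] (hT : IsTreeExt F T)
    (hchild : ∀ i, T.parent (w i) = v ∧ w i ≠ T.root) (hinj : Function.Injective w)
    (hall : ∀ u, T.parent u = v → u ≠ T.root → ∃ i, w i = u)
    (hA : A ⊆ Aset F T v) (hP : P ⊆ T.Z v) :
    Compat F γ T v A ℓ P ↔ (v ∈ P → inN F v = ∅ ∨ 1 ≤ gam F γ v A) ∧
      (P ∩ {v}).ncard + ∑ i, (P ∩ T.Z (w i)).ncard = ℓ ∧
      ∀ i, Compat F γ T (w i) (Aset F T (w i) ∩ (A ∪ P ∩ {v})) (P ∩ T.Z (w i)).ncard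
        (P ∩ T.Z (w i)) := by
  have hgam_child (i : Fin t) (x : V) (hx : x ∈ T.Z (w i)) :
      gam F γ x (P ∪ A) = gam F γ x (P ∩ T.Z (w i) ∪ Aset F T (w i) ∩ (A ∪ P ∩ {v})) :=
    gam_union_eq_gam_child hT (hchild i).1 hP hA hx
  have hsplit : (∀ x ∈ P, inN F x = ∅ ∨ 1 ≤ gam F γ x (P ∪ A)) ↔
      (v ∈ P → inN F v = ∅ ∨ 1 ≤ gam F γ v A) ∧ ∀ i, ∀ x ∈ P ∩ T.Z (w i),
        inN F x = ∅ ∨ 1 ≤ gam F γ x (P ∩ T.Z (w i) ∪ Aset F T (w i) ∩ (A ∪ P ∩ {v})) := by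
    refine ⟨fun h => ⟨fun hv => ?_, fun i x hx => ?_⟩, fun ⟨hv, hchildren⟩ x hx => ?_⟩
    · rw [← gam_union_of_subset_Z hT hP]
      exact h v hv
    · rw [← hgam_child i x hx.2]
      exact h x hx.1
    · rcases RTree.Z_eq_insert_iUnion_Z_children hchild hall ▸ hP hx with rfl | hx'
      · rw [gam_union_of_subset_Z hT hP]
        exact hv hx
      · obtain ⟨i, hi⟩ := Set.mem_iUnion.1 hx'
        rw [hgam_child i x hi]
        exact hchildren i x ⟨hx, hi⟩
  simp only [Compat, hP, Set.inter_subset_right, true_and, hsplit,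
    ← ncard_eq_add_sum_children hchild hinj hall hP]
  tauto

theorem compat_union_iUnion [Finite V] {P₀ : Set V} {Q : Fin t → Set V} {ls : Fin t → ℕ}
    (hT : IsTreeExt F T) (hchild : ∀ i, T.parent (w i) = v ∧ w i ≠ T.root)
    (hinj : Function.Injective w) (hall : ∀ u, T.parent u = v → u ≠ T.root → ∃ i, w i = u)
    (hA : A ⊆ Aset F T v) (hP₀ : P₀ ⊆ {v}) (hv : v ∈ P₀ → inN F v = ∅ ∨ 1 ≤ gam F γ v A)
    (hQ : ∀ i, Compat F γ T (w i) (Aset F T (w i) ∩ (A ∪ P₀)) (ls i) (Q i)) :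
    Compat F γ T v A (P₀.ncard + ∑ i, ls i) (P₀ ∪ ⋃ i, Q i) := by
  have hQZ i : Q i ⊆ T.Z (w i) := (hQ i).1
  have hPv := union_iUnion_inter_singleton hchild hP₀ hQZ
  rw [compat_iff_of_subset_Z hT hchild hinj hall hA (union_iUnion_subset_Z hchild hP₀ hQZ), hPv]
  simp only [union_iUnion_inter_Z_child hchild hinj hP₀ hQZ, (hQ _).2.1]
  exact ⟨fun hvP => hv (hPv ▸ ⟨hvP, rfl⟩), trivial, hQ⟩

theorem le_Sval (d : V → ℕ) (h : Compat F γ T v A ℓ P) :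
    ((dsum d P : ℕ) : EReal) ≤ Sval F γ d T v A ℓ :=
  le_sSup ⟨P, h, rfl⟩

-- The supremum ranges over the finitely many values `d(P)`, so it is attained unless empty.
theorem Sval_eq_bot_or_exists [Finite V] (d : V → ℕ) :
    Sval F γ d T v A ℓ = ⊥ ∨ ∃ P, Compat F γ T v A ℓ P ∧ Sval F γ d T v A ℓ = dsum d P := by
  set s := {x : EReal | ∃ P : Set V, Compat F γ T v A ℓ P ∧ x = (dsum d P : ℕ)}
  have hfin : s.Finite := (Set.finite_range fun P : Set V => ((dsum d P : ℕ) : EReal)).subset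
    fun _ ⟨P, _, hx⟩ => ⟨P, hx.symm⟩
  rcases s.eq_empty_or_nonempty with hs | hs
  · exact Or.inl (by change sSup s = ⊥; rw [hs, sSup_empty])
  · exact Or.inr (hs.csSup_mem hfin)

end Compat

theorem stmt_18_general {V : Type} [Fintype V] (F : V → V → Prop)
    (γ : V → V → ℝ)
    (d : V → ℕ)
    (T : RTree V) (hT : IsTreeExt F T)
    (v : V) (t : ℕ) (w : Fin t → V)
    (hchild : ∀ i, T.parent (w i) = v ∧ w i ≠ T.root)
    (hinj : Function.Injective w)
    (hall : ∀ u, T.parent u = v → u ≠ T.root → ∃ i, w i = u)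
    (A' : Set V) (hA' : A' ⊆ Aset F T v) (ℓ : ℕ) :
    Sval F γ d T v A' ℓ =
      sSup {x : EReal | ∃ (P₀ : Set V) (ls : Fin t → ℕ),
        (P₀ = ∅ ∨ (P₀ = {v} ∧ (inN F v = ∅ ∨ 1 ≤ gam F γ v A'))) ∧
        P₀.ncard + ∑ i, ls i = ℓ ∧
        x = (dsum d P₀ : ℕ) +
          ∑ i, Sval F γ d T (w i) (Aset F T (w i) ∩ (A' ∪ P₀)) (ls i)} := by
  apply le_antisymm
  · refine sSup_le ?_
    rintro _ ⟨P, hP, rfl⟩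
    obtain ⟨hv, hcard, hchildren⟩ :=
      (compat_iff_of_subset_Z hT hchild hinj hall hA' hP.1).1 hP
    refine le_sSup_of_le ⟨P ∩ {v}, fun i => (P ∩ T.Z (w i)).ncard,
      inter_singleton_eq_empty_or_iff.2 hv, hcard, rfl⟩ ?_
    rw [dsum_eq_add_sum_children d hchild hinj hall hP.1]
    push_cast
    gcongr with i
    exact le_Sval d (hchildren i)
  · refine sSup_le ?_
    rintro _ ⟨P₀, ls, hP₀, rfl, rfl⟩
    by_cases hbot : ∃ i, Sval F γ d T (w i) (Aset F T (w i) ∩ (A' ∪ P₀)) (ls i) = ⊥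
    · obtain ⟨i, hi⟩ := hbot
      rw [← Finset.add_sum_erase _ _ (Finset.mem_univ i), hi, EReal.bot_add, EReal.add_bot]
      exact bot_le
    push Not at hbot
    choose Q hQ hval using fun i => (Sval_eq_bot_or_exists d).resolve_left (hbot i)
    have hP₀v : P₀ ⊆ {v} ∧ (v ∈ P₀ → inN F v = ∅ ∨ 1 ≤ gam F γ v A') := by
      rcases hP₀ with rfl | ⟨rfl, h⟩
      exacts [by simp, ⟨subset_rfl, fun _ => h⟩]
    refine le_sSup_of_le ⟨_, compat_union_iUnion hT hchild hinj hall hA' hP₀v.1 hP₀v.2 hQ, rfl⟩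
      (le_of_eq ?_)
    rw [dsum_union_iUnion d hchild hinj hall hP₀v.1 fun i => (hQ i).1]
    push_cast [hval]
    rfl

/-- Dynamic-programming correctness at internal nodes: for an internal node
`v` of `T` with children `w 0, …, w (t-1)`,
`S[v,A',ℓ] = max over P₀ ∈ 𝒫₀(A') and ℓ₁,…,ℓ_t ≥ 0 with |P₀| + Σᵢ ℓᵢ = ℓ of
d(P₀) + Σᵢ S[wᵢ, A_{wᵢ} ∩ (A' ∪ P₀), ℓᵢ]`, where `𝒫₀(A') = {∅, {v}}` if `v` is a source
of `F` or `γ_v(A') ≥ 1`, and `𝒫₀(A') = {∅}` otherwise. -/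
theorem stmt_18 {V : Type} [Fintype V] (F : V → V → Prop) (hacyc : Acyclic F)
    (γ : V → V → ℝ) (hγ : ∀ u v, F u v → 0 < γ u v ∧ γ u v ≤ 1)
    (d : V → ℕ) (hd : ∀ v, 1 ≤ d v)
    (T : RTree V) (hT : IsTreeExt F T)
    (v : V) (t : ℕ) (hinternal : 1 ≤ t) (w : Fin t → V)
    (hchild : ∀ i, T.parent (w i) = v ∧ w i ≠ T.root)
    (hinj : Function.Injective w)
    (hall : ∀ u, T.parent u = v → u ≠ T.root → ∃ i, w i = u)
    (A' : Set V) (hA' : A' ⊆ Aset F T v) (ℓ : ℕ) :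
    Sval F γ d T v A' ℓ =
      sSup {x : EReal | ∃ (P₀ : Set V) (ls : Fin t → ℕ),
        (P₀ = ∅ ∨ (P₀ = {v} ∧ (inN F v = ∅ ∨ 1 ≤ gam F γ v A'))) ∧
        P₀.ncard + ∑ i, ls i = ℓ ∧
        x = (dsum d P₀ : ℕ) +
          ∑ i, Sval F γ d T (w i) (Aset F T (w i) ∩ (A' ∪ P₀)) (ls i)} :=
  stmt_18_general F γ d T hT v t w hchild hinj hall A' hA' ℓ
end
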